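/- Let (b_n)_{n≥0} satisfy b_0 = 1, b_n | b_{n+1}, b_n ≠ b_{n+1}, and suppose the sequence (b_{n+1}/b_n) is unbounded. Let τ_{(b_nZ)} be the linear topology on Z with neighbourhood basis {b_n Z} and let τ_S be the topology of uniform convergence on S = {1/b_n + Z : n ∈ N} ⊆ T. Then the sequence l_j = b_j · ⌊b_{j+1}/(2 b_j)⌋ converges to 0 in τ_{(b_nZ)} but not in τ_S; consequently τ_S ≠ τ_{(b_nZ)}. -/

import Mathlib

/-- `T_m = [-1/(4m), 1/(4m)] + ℤ` inside the circle `𝕋 = ℝ/ℤ`. -/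
def Tm (m : ℕ) : Set (AddCircle (1 : ℝ)) :=
  {z | ∃ r : ℝ, |r| ≤ 1 / (4 * m) ∧ (r : AddCircle (1 : ℝ)) = z}

/-!
The first part is just `b n ∣ b j` for `n ≤ j`. For the second, take `j` as large as we like
with `r = b (j + 1) / b j ≥ 4`. At the point `1 / b (j + 1)` of `S`, the integer
`l_j = b j ⌊r / 2⌋` gives the value `⌊r / 2⌋ / r ∈ (1/4, 1/2]`, which is more than `1/4` away
from `ℤ`, so `l_j ∉ V_{S,1}`.
-/

open Set

theorem exists_ge_lt_of_forall_exists_lt {β : Type*} [LinearOrder β] {f : ℕ → β}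
    (hf : ∀ C, ∃ n, C < f n) (C : β) (J : ℕ) : ∃ n ≥ J, C < f n := by
  have : Nonempty β := ⟨C⟩
  obtain ⟨M, hM⟩ := ((finite_lt_nat J).image f).bddAbove
  obtain ⟨n, hn⟩ := hf (max C M)
  refine ⟨n, not_lt.mp fun hnJ => ?_, (le_max_left C M).trans_lt hn⟩
  exact (hn.trans_le (hM (mem_image_of_mem f hnJ))).not_ge (le_max_right C M)

theorem exists_int_abs_sub_le_of_coe_mem_Tm {m : ℕ} {x : ℝ}
    (hx : (x : AddCircle (1 : ℝ)) ∈ Tm m) : ∃ k : ℤ, |x - k| ≤ 1 / (4 * m) := by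
  obtain ⟨r, hr, hrx⟩ := hx
  obtain ⟨k, hk⟩ := (AddCircle.coe_eq_zero_iff 1).mp
    (show ((x - r : ℝ) : AddCircle (1 : ℝ)) = 0 by rw [AddCircle.coe_sub, hrx, sub_self])
  refine ⟨k, ?_⟩
  rwa [show (k : ℝ) = x - r by simpa using hk, sub_sub_cancel]

theorem coe_notMem_Tm_one {x : ℝ} (h₁ : 1 / 4 < x) (h₂ : x < 3 / 4) :
    (x : AddCircle (1 : ℝ)) ∉ Tm 1 := fun hx => by
  obtain ⟨k, hk⟩ := exists_int_abs_sub_le_of_coe_mem_Tm hx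
  rw [Nat.cast_one, mul_one, abs_le] at hk
  have hk₀ : (0 : ℤ) < k := by exact_mod_cast (by linarith : (0 : ℝ) < k)
  have hk₁ : k < 1 := by exact_mod_cast (by linarith : (k : ℝ) < 1)
  omega

theorem floor_half_div_self_mem_Ioc {r : ℝ} (hr : 4 ≤ r) :
    (⌊r / 2⌋ : ℝ) / r ∈ Ioc (1 / 4) (1 / 2) := by
  have hr₀ : 0 < r := by linarith
  constructor
  · rw [lt_div_iff₀ hr₀]
    linarith [Int.sub_one_lt_floor (r / 2)]
  · rw [div_le_iff₀ hr₀]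
    linarith [Int.floor_le (r / 2)]

theorem linear_ne_S_topology_general (b : ℕ → ℕ)
    (hdvd : ∀ n, b n ∣ b (n + 1))
    (hub : ∀ C : ℝ, ∃ n : ℕ, C < (b (n + 1) : ℝ) / (b n : ℝ)) :
    (∀ n : ℕ, ∃ J : ℕ, ∀ j ≥ J,
        (b n : ℤ) ∣ (b j : ℤ) * ⌊(b (j + 1) : ℝ) / (2 * (b j : ℝ))⌋) ∧
    ¬ (∀ m : ℕ, 0 < m → ∃ J : ℕ, ∀ j ≥ J, ∀ n : ℕ,
        ((((b j : ℝ) * (⌊(b (j + 1) : ℝ) / (2 * (b j : ℝ))⌋ : ℝ)) / (b n : ℝ) : ℝ) :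
          AddCircle (1 : ℝ)) ∈ Tm m) := by
  refine ⟨fun n => ⟨n, fun j hj => ?_⟩, fun h => ?_⟩
  · exact (Int.natCast_dvd_natCast.mpr (Nat.rel_of_forall_rel_succ_of_le _ hdvd hj)).mul_right _
  · obtain ⟨J, hJ⟩ := h 1 one_pos
    obtain ⟨j, hjJ, hj⟩ := exists_ge_lt_of_forall_exists_lt hub 4 J
    set r : ℝ := b (j + 1) / b j
    have hl : (b j : ℝ) * ⌊(b (j + 1) : ℝ) / (2 * b j)⌋ / b (j + 1) = ⌊r / 2⌋ / r := by
      rw [div_div_eq_mul_div, div_div, mul_comm (2 : ℝ), mul_comm (b j : ℝ)]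
    obtain ⟨h₁, h₂⟩ := floor_half_div_self_mem_Ioc hj.le
    exact coe_notMem_Tm_one h₁ (by linarith) (hl ▸ hJ j hjJ (j + 1))

/-- Let `(b_n)` satisfy `b_0 = 1`, `b_n ∣ b_{n+1}`, `b_n ≠ b_{n+1}` with `(b_{n+1}/b_n)`
unbounded.  The sequence `l_j = b_j ⌊b_{j+1}/(2 b_j)⌋` converges to `0` in the linear
topology `τ_{(b_n ℤ)}` (for every `n`, eventually `b_n ∣ l_j`), but does not converge to `0`
in the topology `τ_S` of uniform convergence on `S = {1/b_n + ℤ}`; hence `τ_S ≠ τ_{(b_n ℤ)}`. -/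
theorem linear_ne_S_topology (b : ℕ → ℕ) (hb0 : b 0 = 1)
    (hdvd : ∀ n, b n ∣ b (n + 1)) (hne : ∀ n, b n ≠ b (n + 1))
    (hub : ∀ C : ℝ, ∃ n : ℕ, C < (b (n + 1) : ℝ) / (b n : ℝ)) :
    (∀ n : ℕ, ∃ J : ℕ, ∀ j ≥ J,
        (b n : ℤ) ∣ (b j : ℤ) * ⌊(b (j + 1) : ℝ) / (2 * (b j : ℝ))⌋) ∧
    ¬ (∀ m : ℕ, 0 < m → ∃ J : ℕ, ∀ j ≥ J, ∀ n : ℕ,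
        ((((b j : ℝ) * (⌊(b (j + 1) : ℝ) / (2 * (b j : ℝ))⌋ : ℝ)) / (b n : ℝ) : ℝ) :
          AddCircle (1 : ℝ)) ∈ Tm m) :=
  linear_ne_S_topology_general b hdvd hub
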